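/- Let ℭ be an atomless Boolean algebra carrying a normalised submeasure μ, let a₀, a₁, ..., aₙ be nonzero elements of ℭ forming a finite partition of unity, and for each i ≤ n let φᵢ be a normalised submeasure on the relative algebra ℭ_{aᵢ} = {b ∈ ℭ : b ≤ aᵢ}. Then ℭ carries a normalised submeasure φ such that φ(a) = μ(aᵢ)·φᵢ(a) whenever i ≤ n and a ≤ aᵢ, and φ(a) = μ(a) whenever a lies in the subalgebra of ℭ generated by {a₀, ..., aₙ}. Moreover, if μ and all the φᵢ take only rational values then so does φ. -/

import Mathlib

/-- `S` is a (Boolean) subalgebra of the Boolean algebra `A`. -/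
def IsBoolSubalgebra {A : Type*} [BooleanAlgebra A] (S : Set A) : Prop :=
  ⊥ ∈ S ∧ ⊤ ∈ S ∧ (∀ x ∈ S, ∀ y ∈ S, x ⊔ y ∈ S) ∧
    (∀ x ∈ S, ∀ y ∈ S, x ⊓ y ∈ S) ∧ (∀ x ∈ S, xᶜ ∈ S)

/-- The subalgebra of `A` generated by a set `G`. -/
def boolGenBy {A : Type*} [BooleanAlgebra A] (G : Set A) : Set A :=
  ⋂₀ {S : Set A | IsBoolSubalgebra S ∧ G ⊆ S}

/-!
Take `ψ b = min_S (μ (⨆ i ∈ S, aᵢ) + ∑ i ∉ S, μ(aᵢ) φᵢ(b ⊓ aᵢ))`: the blocks in `S` are paid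
for at once through `μ`, every other block locally through `μ(aᵢ) φᵢ`. Taking the union of
the index sets of two optimal covers shows subadditivity. Below a single block `aᵢ` the empty
cover is optimal, because `μ(aᵢ) φᵢ ≤ μ(aᵢ)`; on a union of blocks the cover by exactly those
blocks is optimal, because `μ` is subadditive and `φᵢ(aᵢ) = 1`.
-/

open Finset Function

structure IsSubmeasure {C : Type*} [BooleanAlgebra C] (μ : C → ℝ) : Prop where
  map_bot : μ ⊥ = 0
  mono : Monotone μ
  map_sup_le : ∀ b c, μ (b ⊔ c) ≤ μ b + μ c

namespace IsSubmeasure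

variable {C : Type*} [BooleanAlgebra C] {μ : C → ℝ}

theorem nonneg (hμ : IsSubmeasure μ) (b : C) : 0 ≤ μ b :=
  hμ.map_bot ▸ hμ.mono bot_le

theorem const_mul (hμ : IsSubmeasure μ) {r : ℝ} (hr : 0 ≤ r) : IsSubmeasure (r * μ ·) where
  map_bot := by simp [hμ.map_bot]
  mono _ _ h := mul_le_mul_of_nonneg_left (hμ.mono h) hr
  map_sup_le b c := by rw [← mul_add]; exact mul_le_mul_of_nonneg_left (hμ.map_sup_le b c) hr

theorem finset_sup_le_sum {ι : Type*} [DecidableEq ι] (hμ : IsSubmeasure μ) (a : ι → C)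
    (S : Finset ι) : μ (S.sup a) ≤ ∑ i ∈ S, μ (a i) := by
  induction S using Finset.induction_on with
  | empty => simp [hμ.map_bot]
  | insert i S hi ih =>
    rw [sup_insert, sum_insert hi]
    exact (hμ.map_sup_le _ _).trans (by linarith)

end IsSubmeasure

theorem isSubmeasure_comp_inf {C : Type*} [BooleanAlgebra C] (e : C) {φ : C → ℝ}
    (h0 : φ ⊥ = 0) (hmono : ∀ b c, b ≤ c → c ≤ e → φ b ≤ φ c)
    (hsub : ∀ b c, b ≤ e → c ≤ e → φ (b ⊔ c) ≤ φ b + φ c) :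
    IsSubmeasure (fun b => φ (b ⊓ e)) where
  map_bot := by simp [h0]
  mono _ _ h := hmono _ _ (inf_le_inf_right e h) inf_le_right
  map_sup_le b c := by simpa only [inf_sup_right] using hsub _ _ inf_le_right inf_le_right

section Partition

variable {C ι : Type*} [BooleanAlgebra C] [Fintype ι] [DecidableEq ι] {a : ι → C}

theorem compl_finset_sup (hdisj : Pairwise (Disjoint on a)) (hsup : univ.sup a = ⊤)
    (S : Finset ι) : (S.sup a)ᶜ = Sᶜ.sup a := by
  refine (IsCompl.compl_eq ⟨?_, ?_⟩)
  · refine Finset.disjoint_sup_left.2 fun i hi => Finset.disjoint_sup_right.2 fun j hj => ?_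
    exact hdisj (ne_of_mem_of_not_mem hi (mem_compl.1 hj))
  · rw [codisjoint_iff, ← sup_union, union_compl, hsup]

theorem isBoolSubalgebra_range_finset_sup (hdisj : Pairwise (Disjoint on a))
    (hsup : univ.sup a = ⊤) : IsBoolSubalgebra (Set.range fun S : Finset ι => S.sup a) := by
  set R := Set.range fun S : Finset ι => S.sup a
  have hsupMem : ∀ x ∈ R, ∀ y ∈ R, x ⊔ y ∈ R := by
    rintro _ ⟨S, rfl⟩ _ ⟨T, rfl⟩
    exact ⟨S ∪ T, sup_union⟩
  have hcomplMem : ∀ x ∈ R, xᶜ ∈ R := by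
    rintro _ ⟨S, rfl⟩
    exact ⟨Sᶜ, (compl_finset_sup hdisj hsup S).symm⟩
  refine ⟨⟨∅, sup_empty⟩, ⟨univ, hsup⟩, hsupMem, fun x hx y hy => ?_, hcomplMem⟩
  rw [← compl_compl (x ⊓ y), compl_inf]
  exact hcomplMem _ (hsupMem _ (hcomplMem x hx) _ (hcomplMem y hy))

theorem boolGenBy_range_subset (hdisj : Pairwise (Disjoint on a)) (hsup : univ.sup a = ⊤) :
    boolGenBy (Set.range a) ⊆ Set.range fun S : Finset ι => S.sup a :=
  Set.sInter_subset_of_mem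
    ⟨isBoolSubalgebra_range_finset_sup hdisj hsup, fun _ ⟨i, hi⟩ => ⟨{i}, hi ▸ sup_singleton⟩⟩

end Partition

section Glue

variable {C ι : Type*} [BooleanAlgebra C] [Fintype ι] [DecidableEq ι]
  {μ : C → ℝ} {a : ι → C} {ρ : ι → C → ℝ}

def glueCost (μ : C → ℝ) (a : ι → C) (ρ : ι → C → ℝ) (S : Finset ι) (b : C) : ℝ :=
  μ (S.sup a) + ∑ i ∈ Sᶜ, ρ i b

noncomputable def glue (μ : C → ℝ) (a : ι → C) (ρ : ι → C → ℝ) (b : C) : ℝ :=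
  univ.inf' univ_nonempty fun S => glueCost μ a ρ S b

theorem glue_le_glueCost (S : Finset ι) (b : C) : glue μ a ρ b ≤ glueCost μ a ρ S b :=
  inf'_le _ (mem_univ S)

theorem le_glue {b : C} {r : ℝ} (h : ∀ S, r ≤ glueCost μ a ρ S b) : r ≤ glue μ a ρ b :=
  le_inf' _ _ fun S _ => h S

theorem exists_glue_eq_glueCost (μ : C → ℝ) (a : ι → C) (ρ : ι → C → ℝ) (b : C) :
    ∃ S, glue μ a ρ b = glueCost μ a ρ S b := by
  obtain ⟨S, -, hS⟩ := exists_mem_eq_inf' univ_nonempty fun S => glueCost μ a ρ S b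
  exact ⟨S, hS⟩

theorem glue_mem (R : AddSubmonoid ℝ) (hμ : ∀ b, μ b ∈ R) (hρ : ∀ i b, ρ i b ∈ R) (b : C) :
    glue μ a ρ b ∈ R := by
  obtain ⟨S, hS⟩ := exists_glue_eq_glueCost μ a ρ b
  exact hS ▸ add_mem (hμ _) (sum_mem fun i _ => hρ i b)

theorem glueCost_nonneg (hμ : IsSubmeasure μ) (hρ : ∀ i, IsSubmeasure (ρ i)) (S : Finset ι)
    (b : C) : 0 ≤ glueCost μ a ρ S b :=
  add_nonneg (hμ.nonneg _) (sum_nonneg fun i _ => (hρ i).nonneg b)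

theorem glueCost_mono (hρ : ∀ i, IsSubmeasure (ρ i)) (S : Finset ι) :
    Monotone (glueCost μ a ρ S) := fun _ _ h => by
  unfold glueCost; gcongr with i; exact (hρ i).mono h

theorem glueCost_union_sup_le (hμ : IsSubmeasure μ) (hρ : ∀ i, IsSubmeasure (ρ i))
    (S T : Finset ι) (b d : C) :
    glueCost μ a ρ (S ∪ T) (b ⊔ d) ≤ glueCost μ a ρ S b + glueCost μ a ρ T d := by
  have hsum (U : Finset ι) (hU : U ⊆ S ∪ T) (e : C) :
      ∑ i ∈ (S ∪ T)ᶜ, ρ i e ≤ ∑ i ∈ Uᶜ, ρ i e :=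
    sum_le_sum_of_subset_of_nonneg (compl_subset_compl.2 hU) fun i _ _ => (hρ i).nonneg e
  calc glueCost μ a ρ (S ∪ T) (b ⊔ d)
      ≤ μ (S.sup a) + μ (T.sup a) + (∑ i ∈ (S ∪ T)ᶜ, ρ i b + ∑ i ∈ (S ∪ T)ᶜ, ρ i d) := by
        rw [glueCost, sup_union, ← sum_add_distrib]
        exact add_le_add (hμ.map_sup_le _ _) (sum_le_sum fun i _ => (hρ i).map_sup_le b d)
    _ ≤ glueCost μ a ρ S b + glueCost μ a ρ T d := by
        have := hsum S subset_union_left b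
        have := hsum T subset_union_right d
        simp only [glueCost]
        linarith

theorem isSubmeasure_glue (hμ : IsSubmeasure μ) (hρ : ∀ i, IsSubmeasure (ρ i)) :
    IsSubmeasure (glue μ a ρ) where
  map_bot := le_antisymm
    ((glue_le_glueCost ∅ ⊥).trans_eq (by simp [glueCost, hμ.map_bot, (hρ _).map_bot]))
    (le_glue fun S => glueCost_nonneg hμ hρ S ⊥)
  mono b d h := le_glue fun S => (glue_le_glueCost S b).trans (glueCost_mono hρ S h)
  map_sup_le b d := by
    obtain ⟨S, hS⟩ := exists_glue_eq_glueCost μ a ρ b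
    obtain ⟨T, hT⟩ := exists_glue_eq_glueCost μ a ρ d
    rw [hS, hT]
    exact (glue_le_glueCost _ _).trans (glueCost_union_sup_le hμ hρ S T b d)

theorem glue_finset_sup (hμ : IsSubmeasure μ) (hρ : ∀ i, IsSubmeasure (ρ i))
    (hdisj : Pairwise (Disjoint on a)) (hvanish : ∀ i b, Disjoint b (a i) → ρ i b = 0)
    (hge : ∀ i, μ (a i) ≤ ρ i (a i)) (S : Finset ι) :
    glue μ a ρ (S.sup a) = μ (S.sup a) := by
  refine le_antisymm ((glue_le_glueCost S _).trans_eq ?_) (le_glue fun T => ?_)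
  · refine add_eq_left.2 (sum_eq_zero fun i hi => hvanish i _ ?_)
    exact Finset.disjoint_sup_left.2 fun j hj => hdisj (ne_of_mem_of_not_mem hj (mem_compl.1 hi))
  · have hsdiff : ∑ i ∈ S \ T, μ (a i) ≤ ∑ i ∈ Tᶜ, ρ i (S.sup a) := by
      refine (sum_le_sum fun i hi => (hge i).trans ((hρ i).mono
        (le_sup (mem_sdiff.1 hi).1))).trans ?_
      exact sum_le_sum_of_subset_of_nonneg (fun i hi => mem_compl.2 (mem_sdiff.1 hi).2)
        fun i _ _ => (hρ i).nonneg _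
    calc μ (S.sup a) ≤ μ (T.sup a ⊔ (S \ T).sup a) := by
          rw [← sup_union, union_sdiff_self_eq_union]
          exact hμ.mono (sup_mono subset_union_right)
      _ ≤ μ (T.sup a) + ∑ i ∈ S \ T, μ (a i) :=
          (hμ.map_sup_le _ _).trans (by gcongr; exact hμ.finset_sup_le_sum a _)
      _ ≤ glueCost μ a ρ T (S.sup a) := by unfold glueCost; gcongr

theorem glue_of_le (hμ : IsSubmeasure μ) (hρ : ∀ i, IsSubmeasure (ρ i))
    (hdisj : Pairwise (Disjoint on a)) (hvanish : ∀ i b, Disjoint b (a i) → ρ i b = 0)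
    (hle : ∀ i b, ρ i b ≤ μ (a i)) {i : ι} {b : C} (hb : b ≤ a i) :
    glue μ a ρ b = ρ i b := by
  have hother : ∀ j ≠ i, ρ j b = 0 := fun j hj => hvanish j b ((hdisj hj.symm).mono_left hb)
  refine le_antisymm ((glue_le_glueCost ∅ b).trans_eq ?_) (le_glue fun S => ?_)
  · simp [glueCost, hμ.map_bot, sum_eq_single i fun j _ => hother j]
  · by_cases hi : i ∈ S
    · calc ρ i b ≤ μ (S.sup a) := (hle i b).trans (hμ.mono (le_sup hi))
        _ ≤ glueCost μ a ρ S b :=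
          le_add_of_nonneg_right (sum_nonneg fun j _ => (hρ j).nonneg b)
    · calc ρ i b ≤ ∑ j ∈ Sᶜ, ρ j b :=
            single_le_sum (fun j _ => (hρ j).nonneg b) (mem_compl.2 hi)
        _ ≤ glueCost μ a ρ S b := le_add_of_nonneg_left (hμ.nonneg _)

end Glue

theorem statement1 (C : Type*) [BooleanAlgebra C]
    (μ : C → ℝ) (hμ0 : μ ⊥ = 0) (hμ1 : μ ⊤ = 1)
    (hμmono : ∀ b c : C, b ≤ c → μ b ≤ μ c)
    (hμsub : ∀ b c : C, μ (b ⊔ c) ≤ μ b + μ c)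
    (n : ℕ) (a : Fin (n + 1) → C)
    (hadisj : ∀ i j, i ≠ j → a i ⊓ a j = ⊥)
    (hasup : Finset.univ.sup a = ⊤)
    (φ : Fin (n + 1) → C → ℝ)
    (hφ0 : ∀ i, φ i ⊥ = 0)
    (hφ1 : ∀ i, φ i (a i) = 1)
    (hφmono : ∀ i, ∀ b c : C, b ≤ c → c ≤ a i → φ i b ≤ φ i c)
    (hφsub : ∀ i, ∀ b c : C, b ≤ a i → c ≤ a i → φ i (b ⊔ c) ≤ φ i b + φ i c) :
    ∃ ψ : C → ℝ,
      ψ ⊥ = 0 ∧ ψ ⊤ = 1 ∧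
      (∀ b c : C, b ≤ c → ψ b ≤ ψ c) ∧
      (∀ b c : C, ψ (b ⊔ c) ≤ ψ b + ψ c) ∧
      (∀ i, ∀ b ≤ a i, ψ b = μ (a i) * φ i b) ∧
      (∀ b ∈ boolGenBy (Set.range a), ψ b = μ b) ∧
      ((∀ b : C, ∃ q : ℚ, μ b = (q : ℝ)) → (∀ i, ∀ b ≤ a i, ∃ q : ℚ, φ i b = (q : ℝ)) →
        ∀ b : C, ∃ q : ℚ, ψ b = (q : ℝ)) := by
  set ρ : Fin (n + 1) → C → ℝ := fun i b => μ (a i) * φ i (b ⊓ a i)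
  have hμ : IsSubmeasure μ := ⟨hμ0, hμmono, hμsub⟩
  have hρ i : IsSubmeasure (ρ i) :=
    (isSubmeasure_comp_inf (a i) (hφ0 i) (hφmono i) (hφsub i)).const_mul (hμ.nonneg _)
  have hdisj : Pairwise (Disjoint on a) := fun i j h => disjoint_iff.2 (hadisj i j h)
  have hvanish i b (h : Disjoint b (a i)) : ρ i b = 0 := by simp [ρ, h.eq_bot, hφ0]
  have hle i b : ρ i b ≤ μ (a i) := mul_le_of_le_one_right (hμ.nonneg _)
    (hφ1 i ▸ hφmono i _ _ inf_le_right le_rfl)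
  have hsup (S : Finset (Fin (n + 1))) : glue μ a ρ (S.sup a) = μ (S.sup a) :=
    glue_finset_sup hμ hρ hdisj hvanish (fun i => by simp [ρ, hφ1]) S
  have hψ := isSubmeasure_glue (a := a) hμ hρ
  refine ⟨glue μ a ρ, hψ.map_bot, by rw [← hasup, hsup, hasup, hμ1], fun _ _ => (hψ.mono ·),
    hψ.map_sup_le, fun i b hb => ?_, fun b hb => ?_, fun hμℚ hφℚ b => ?_⟩
  · rw [glue_of_le hμ hρ hdisj hvanish hle hb]
    simp only [ρ, inf_eq_left.2 hb]
  · obtain ⟨S, rfl⟩ := boolGenBy_range_subset hdisj hasup hb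
    exact hsup S
  · let ratRange : Subsemiring ℝ := (Rat.castHom ℝ).rangeS
    have hμR b : μ b ∈ ratRange := let ⟨q, hq⟩ := hμℚ b; ⟨q, hq.symm⟩
    have hρR i b : ρ i b ∈ ratRange :=
      mul_mem (hμR _) (let ⟨q, hq⟩ := hφℚ i _ inf_le_right; ⟨q, hq.symm⟩)
    obtain ⟨q, hq⟩ := glue_mem ratRange.toAddSubmonoid hμR hρR b
    exact ⟨q, hq.symm⟩
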